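/- Let S^n be i.i.d. samples from P on ℝ^d, W ~ Unif([n]) independent of (S^n, Z) with Z ~ N(0, β²I_d), and Y = S_W + Z. Then h(P ∗ φ_β) − E[h(P̂_{S^n} ∗ φ_β)] = I(S^n; Y), the mutual information between the sample set and Y. -/

import Mathlib

/-!
Given `S = s`, the variable `Y = s_W + Z` is the sum of independent variables with laws
`P̂_s` (the law of `s_W` for uniform `W`) and `φ_β`, so its conditional law is `P̂_s ∗ φ_β`.
Unconditionally `S_W ~ P`, since every coordinate of the i.i.d. sample has law `P`, hence
`Y ~ P ∗ φ_β`. The identity is then `I(S^n; Y) = h(Y) − h(Y | S^n)` with both terms identified.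
-/

open MeasureTheory ProbabilityTheory Real NNReal ENNReal

/-- Differential entropy of a measure on `ℝ^d`: `h(ν) = −E_ν[log dν/dLeb]`. -/
noncomputable def entMeas {d : ℕ} (ν : Measure (EuclideanSpace ℝ (Fin d))) : ℝ :=
  -∫ y, Real.log ((ν.rnDeriv volume y).toReal) ∂ν

/-- The isotropic Gaussian measure `N(0, β²I_d)` on `EuclideanSpace ℝ (Fin d)`. -/
noncomputable def stdGaussianE (d : ℕ) (β : ℝ≥0) : Measure (EuclideanSpace ℝ (Fin d)) :=
  Measure.map (MeasurableEquiv.toLp 2 (Fin d → ℝ))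
    (Measure.pi fun _ : Fin d => gaussianReal 0 (β ^ 2))

/-- The empirical measure of the samples `s : Fin n → ℝ^d`. -/
noncomputable def empMeasure {d n : ℕ} (s : Fin n → EuclideanSpace ℝ (Fin d)) :
    Measure (EuclideanSpace ℝ (Fin d)) :=
  (n : ℝ≥0∞)⁻¹ • ∑ i, Measure.dirac (s i)

instance isProbabilityMeasure_stdGaussianE (d : ℕ) (β : ℝ≥0) :
    IsProbabilityMeasure (stdGaussianE d β) :=
  Measure.isProbabilityMeasure_map (MeasurableEquiv.measurable _).aemeasurable

section MeasureLemmas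

open Measure

variable {α β γ : Type*} [MeasurableSpace α] [MeasurableSpace β] [MeasurableSpace γ]

lemma measurable_eval_prod {ι : Type*} [Countable ι] [MeasurableSpace ι]
    [MeasurableSingletonClass ι] : Measurable fun p : (ι → α) × ι => p.1 p.2 :=
  measurable_from_prod_countable_left fun i => measurable_pi_apply i

lemma measurable_eval_add {ι G : Type*} [Countable ι] [MeasurableSpace ι]
    [MeasurableSingletonClass ι] [Add G] [MeasurableSpace G] [MeasurableAdd₂ G] :
    Measurable fun p : (ι → G) × ι × G => p.1 p.2.1 + p.2.2 :=
  (measurable_eval_prod.comp (measurable_fst.prodMk measurable_snd.fst)).add measurable_snd.snd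

lemma ProbabilityTheory.Kernel.map_id_prod_const_apply {ν : Measure β} [SFinite ν]
    {f : α × β → γ} (hf : Measurable f) (a : α) :
    (Kernel.id ×ₖ Kernel.const α ν).map f a = ν.map (fun b => f (a, b)) := by
  rw [Kernel.map_apply _ hf, Kernel.prod_apply, Kernel.id_apply, Kernel.const_apply, dirac_prod,
    map_map hf measurable_prodMk_left]
  rfl

lemma MeasureTheory.Measure.map_prod_prodMk_eq_compProd {μ : Measure α} {ν : Measure β}
    [SFinite μ] [SFinite ν] {f : α × β → γ} (hf : Measurable f) :
    (μ.prod ν).map (fun p => (p.1, f p)) = μ ⊗ₘ (Kernel.id ×ₖ Kernel.const α ν).map f := by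
  ext A hA
  have hmk : Measurable fun p : α × β => (p.1, f p) := measurable_fst.prodMk hf
  rw [map_apply hmk hA, prod_apply (hmk hA), compProd_apply hA]
  refine lintegral_congr fun a => ?_
  rw [Kernel.map_id_prod_const_apply hf, map_apply (by fun_prop) (measurable_prodMk_left hA)]
  rfl

lemma ProbabilityTheory.condDistrib_ae_eq_of_map_eq_prod {Ω : Type*} [MeasurableSpace Ω]
    [StandardBorelSpace γ] [Nonempty γ] {μ : Measure Ω} [IsFiniteMeasure μ]
    {X : Ω → α} {V : Ω → β} (hX : Measurable X) (hV : Measurable V)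
    {ν : Measure β} [IsProbabilityMeasure ν]
    (hXV : μ.map (fun ω => (X ω, V ω)) = (μ.map X).prod ν) {f : α × β → γ} (hf : Measurable f) :
    condDistrib (fun ω => f (X ω, V ω)) X μ =ᵐ[μ.map X] (Kernel.id ×ₖ Kernel.const α ν).map f := by
  refine condDistrib_ae_eq_of_measure_eq_compProd_of_measurable hX (hf.comp (hX.prodMk hV)) ?_
  rw [← map_prod_prodMk_eq_compProd hf, ← hXV, map_map (measurable_fst.prodMk hf) (hX.prodMk hV)]
  rfl

lemma MeasureTheory.Measure.map_eval_pi_prod {ι : Type*} [Fintype ι] [MeasurableSpace ι]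
    [MeasurableSingletonClass ι] (P : Measure α) [IsProbabilityMeasure P]
    (ρ : Measure ι) [IsProbabilityMeasure ρ] :
    ((Measure.pi fun _ : ι => P).prod ρ).map (fun p => p.1 p.2) = P := by
  ext A hA
  have hmarginal (i : ι) : Measure.pi (fun _ : ι => P) ((fun s => s i) ⁻¹' A) = P A :=
    (measurePreserving_eval (fun _ : ι => P) i).measure_preimage hA.nullMeasurableSet
  rw [map_apply measurable_eval_prod hA, prod_apply_symm (measurable_eval_prod hA)]
  simp [Set.preimage_preimage, hmarginal]

lemma MeasureTheory.Measure.conv_map_left {G : Type*} [AddMonoid G] [MeasurableSpace G]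
    [MeasurableAdd₂ G] {μ : Measure α} {ν : Measure G} [SFinite μ] [SFinite ν]
    {f : α → G} (hf : Measurable f) :
    (μ.map f).conv ν = (μ.prod ν).map (fun p => f p.1 + p.2) := by
  rw [Measure.conv, ← map_id (μ := ν), map_prod_map _ _ hf measurable_id, map_id,
    map_map measurable_add (hf.prodMap measurable_id)]
  rfl

lemma MeasureTheory.Measure.map_eval_add_pi_prod_prod {ι G : Type*} [Fintype ι]
    [MeasurableSpace ι] [MeasurableSingletonClass ι] [AddMonoid G] [MeasurableSpace G]
    [MeasurableAdd₂ G] (P : Measure G) [IsProbabilityMeasure P] (ρ : Measure ι)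
    [IsProbabilityMeasure ρ] (ν : Measure G) [SFinite ν] :
    ((Measure.pi fun _ : ι => P).prod (ρ.prod ν)).map (fun p => p.1 p.2.1 + p.2.2) =
      P.conv ν := by
  rw [← prodAssoc_prod, map_map measurable_eval_add MeasurableEquiv.prodAssoc.measurable]
  conv_rhs => rw [← map_eval_pi_prod P ρ, conv_map_left measurable_eval_prod]
  rfl

end MeasureLemmas

lemma empMeasure_eq_map_uniform {d n : ℕ} [NeZero n] (s : Fin n → EuclideanSpace ℝ (Fin d)) :
    empMeasure s = (PMF.uniformOfFintype (Fin n)).toMeasure.map s := by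
  ext A hA
  rw [Measure.map_apply (measurable_of_finite s) hA, PMF.toMeasure_apply_fintype, empMeasure]
  simp only [Measure.smul_apply, Measure.finsetSum_apply, Measure.dirac_apply' _ hA,
    smul_eq_mul, Finset.mul_sum]
  refine Finset.sum_congr rfl fun i _ => ?_
  by_cases h : s i ∈ A <;> simp [h]

theorem spBias_eq_mutualInfo_general {d n : ℕ} [NeZero n] (β : ℝ≥0)
    {Ω : Type*} [MeasureSpace Ω] [IsProbabilityMeasure (ℙ : Measure Ω)]
    (P : Measure (EuclideanSpace ℝ (Fin d))) [IsProbabilityMeasure P]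
    (S : Ω → (Fin n → EuclideanSpace ℝ (Fin d))) (W : Ω → Fin n)
    (Z : Ω → EuclideanSpace ℝ (Fin d))
    (hS : Measurable S) (hW : Measurable W) (hZ : Measurable Z)
    (hjoint : Measure.map (fun ω => (S ω, W ω, Z ω)) ℙ =
      (Measure.pi fun _ : Fin n => P).prod
        (((PMF.uniformOfFintype (Fin n)).toMeasure).prod (stdGaussianE d β))) :
    entMeas (P.conv (stdGaussianE d β)) -
        ∫ ω, entMeas ((empMeasure (S ω)).conv (stdGaussianE d β)) =
      entMeas (Measure.map (fun ω => S ω (W ω) + Z ω) ℙ) -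
        ∫ ω, entMeas ((condDistrib (fun ω' => S ω' (W ω') + Z ω') S ℙ) (S ω)) := by
  set U := (PMF.uniformOfFintype (Fin n)).toMeasure
  set G := stdGaussianE d β
  have hV : Measurable fun ω => (W ω, Z ω) := hW.prodMk hZ
  have hlawS : Measure.map S ℙ = Measure.pi fun _ => P := by
    rw [← Measure.fst_prod (μ := Measure.pi fun _ => P) (ν := U.prod G), ← hjoint,
      Measure.fst_map_prodMk hV]
  have hlawY : Measure.map (fun ω => S ω (W ω) + Z ω) ℙ = P.conv G := by
    rw [← Measure.map_eval_add_pi_prod_prod P U G, ← hjoint,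
      Measure.map_map measurable_eval_add (hS.prodMk hV)]
    rfl
  have hcond : ∀ᵐ s ∂(Measure.map S ℙ), (empMeasure s).conv G =
      condDistrib (fun ω => S ω (W ω) + Z ω) S ℙ s := by
    filter_upwards [condDistrib_ae_eq_of_map_eq_prod hS hV (hlawS ▸ hjoint)
      measurable_eval_add] with s hs
    rw [hs, Kernel.map_id_prod_const_apply measurable_eval_add, empMeasure_eq_map_uniform,
      Measure.conv_map_left (measurable_of_finite s)]
  rw [hlawY, integral_congr_ae ((ae_of_ae_map hS.aemeasurable hcond).mono
    fun ω h => congrArg entMeas h)]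

/-- Bias identity for the plug-in estimator: with `S^n` i.i.d. from `P`, `W` uniform on `[n]`,
`Z ~ N(0, β²I_d)`, all independent, and `Y = S_W + Z`,
`h(P ∗ φ_β) − E[h(P̂_{S^n} ∗ φ_β)] = I(S^n; Y)`, where the mutual information is
`I(S^n; Y) = h(Y) − h(Y | S^n)` with `h(Y | S^n)` the expected entropy of the conditional
law of `Y` given `S^n`. -/
theorem spBias_eq_mutualInfo {d n : ℕ} [NeZero n] (β : ℝ≥0) (hβ : 0 < β)
    {Ω : Type*} [MeasureSpace Ω] [IsProbabilityMeasure (ℙ : Measure Ω)]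
    (P : Measure (EuclideanSpace ℝ (Fin d))) [IsProbabilityMeasure P]
    (S : Ω → (Fin n → EuclideanSpace ℝ (Fin d))) (W : Ω → Fin n)
    (Z : Ω → EuclideanSpace ℝ (Fin d))
    (hS : Measurable S) (hW : Measurable W) (hZ : Measurable Z)
    (hjoint : Measure.map (fun ω => (S ω, W ω, Z ω)) ℙ =
      (Measure.pi fun _ : Fin n => P).prod
        (((PMF.uniformOfFintype (Fin n)).toMeasure).prod (stdGaussianE d β))) :
    entMeas (P.conv (stdGaussianE d β)) -
        ∫ ω, entMeas ((empMeasure (S ω)).conv (stdGaussianE d β)) =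
      entMeas (Measure.map (fun ω => S ω (W ω) + Z ω) ℙ) -
        ∫ ω, entMeas ((condDistrib (fun ω' => S ω' (W ω') + Z ω') S ℙ) (S ω)) :=
  spBias_eq_mutualInfo_general β P S W Z hS hW hZ hjoint
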